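/- arXiv:2510.10854 — 7 statements merged into one kernel-verified Lean document; each statement's English description precedes it below -/
import Mathlib

section
/- Let d ≥ 1 be a natural number and 0 < a ≤ b be real numbers. For all vectors x, y ∈ [a,b]^d, the generalized I-divergence satisfies D_I(x‖y) ≤ (1/(2a))·‖x − y‖₂². -/
open Real

private lemma hderiv_ent (s : ℝ) (hs0 : 0 < s) :
    HasDerivAt (fun s : ℝ => s * Real.log s - s + 1) (Real.log s) s := by
  have := (((hasDerivAt_id s).mul (Real.hasDerivAt_log (ne_of_gt hs0))).sub
    (hasDerivAt_id s)).add_const 1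
  refine this.congr_deriv ?_
  simp [hs0.ne']

private lemma cont_ent (S : Set ℝ) (hS : ∀ s ∈ S, s ≠ 0) :
    ContinuousOn (fun s : ℝ => s * Real.log s - s + 1) S := by
  apply ContinuousOn.add
  · apply ContinuousOn.sub _ (by fun_prop)
    exact continuousOn_id.mul (Real.continuousOn_log.mono (by
      intro s hs; exact hS s hs))
  · fun_prop

lemma key1 (t : ℝ) (ht : 1 ≤ t) : t * Real.log t - t + 1 ≤ (t - 1) ^ 2 / 2 := by
  set f : ℝ → ℝ := fun s => (s - 1) ^ 2 / 2 - (s * Real.log s - s + 1) with hf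
  have hder : ∀ s : ℝ, 0 < s → HasDerivAt f ((s - 1) - Real.log s) s := by
    intro s hs0
    have h1 : HasDerivAt (fun s : ℝ => (s - 1) ^ 2 / 2) (s - 1) s := by
      have := (((hasDerivAt_id s).sub_const 1).pow 2).div_const 2
      refine this.congr_deriv ?_
      simp
    exact h1.sub (hderiv_ent s hs0)
  have hmono : MonotoneOn f (Set.Ici 1) := by
    apply monotoneOn_of_deriv_nonneg (convex_Ici 1)
    · exact ContinuousOn.sub (by fun_prop)
        (cont_ent _ (fun s hs => by simp only [Set.mem_Ici] at hs; linarith))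
    · intro s hs
      rw [interior_Ici] at hs
      exact ((hder s (by linarith [Set.mem_Ioi.mp hs])).differentiableAt).differentiableWithinAt
    · intro s hs
      rw [interior_Ici] at hs
      have hs1 : (1:ℝ) < s := hs
      rw [(hder s (by linarith)).deriv]
      have := Real.log_le_sub_one_of_pos (by linarith : (0:ℝ) < s)
      linarith
  have h0 : f 1 = 0 := by simp [hf]
  have := hmono (Set.self_mem_Ici) (Set.mem_Ici.mpr ht) ht
  rw [h0] at this
  simp only [hf] at this
  linarith

lemma key2 (t : ℝ) (ht0 : 0 < t) (ht1 : t ≤ 1) :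
    t * Real.log t - t + 1 ≤ (t - 1) ^ 2 / (2 * t) := by
  set g : ℝ → ℝ := fun s => (s - 1) ^ 2 / (2 * s) - (s * Real.log s - s + 1) with hg
  have hder : ∀ s : ℝ, 0 < s →
      HasDerivAt g ((1/2 - 1/(2*s^2)) - Real.log s) s := by
    intro s hs0
    have h1 : HasDerivAt (fun s : ℝ => (s - 1) ^ 2 / (2 * s))
        (1/2 - 1/(2*s^2)) s := by
      have hnum := ((hasDerivAt_id s).sub_const 1).pow 2
      have hden := (hasDerivAt_id s).const_mul (2:ℝ)
      have := hnum.div hden (by positivity)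
      refine this.congr_deriv ?_
      simp only [id, Pi.pow_apply]
      field_simp
      ring
    exact h1.sub (hderiv_ent s hs0)
  have hanti : AntitoneOn g (Set.Ioc 0 1) := by
    apply antitoneOn_of_deriv_nonpos (convex_Ioc 0 1)
    · apply ContinuousOn.sub
      · apply ContinuousOn.div (by fun_prop) (by fun_prop)
        intro s hs
        have : 0 < s := hs.1
        positivity
      · exact cont_ent _ (fun s hs => ne_of_gt hs.1)
    · intro s hs
      rw [interior_Ioc] at hs
      exact ((hder s hs.1).differentiableAt).differentiableWithinAt
    · intro s hs
      rw [interior_Ioc] at hs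
      have hs0 : (0:ℝ) < s := hs.1
      rw [(hder s hs0).deriv]
      have hlog : 1 - s⁻¹ ≤ Real.log s := Real.one_sub_inv_le_log_of_pos hs0
      have hsq : (0:ℝ) < s^2 := by positivity
      have h3 : 1/2 - 1/(2*s^2) ≤ 1 - s⁻¹ := by
        have e : 1/(2*s^2) = s⁻¹^2/2 := by field_simp
        rw [e]
        nlinarith [sq_nonneg (s⁻¹ - 1)]
      linarith
  have h0 : g 1 = 0 := by simp [hg]
  have := hanti (Set.mem_Ioc.mpr ⟨ht0, ht1⟩) (Set.mem_Ioc.mpr ⟨one_pos, le_refl 1⟩) ht1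
  rw [h0] at this
  simp only [hg] at this
  linarith
lemma pointwise (a b u v : ℝ) (ha : 0 < a) (hu : u ∈ Set.Icc a b) (hv : v ∈ Set.Icc a b) :
    -u + v + u * Real.log (u / v) ≤ (1 / (2 * a)) * (u - v) ^ 2 := by
  have hu0 : 0 < u := lt_of_lt_of_le ha hu.1
  have hv0 : 0 < v := lt_of_lt_of_le ha hv.1
  rcases le_total v u with hle | hle
  · -- u ≥ v : use key1 on t = u/v
    have ht : 1 ≤ u / v := (one_le_div hv0).mpr hle
    have hk := key1 (u / v) ht
    rw [Real.log_div (ne_of_gt hu0) (ne_of_gt hv0)] at *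
    have h2 : -u + v + u * (Real.log u - Real.log v) ≤ (u - v) ^ 2 / (2 * v) := by
      have := mul_le_mul_of_nonneg_left hk hv0.le
      have e1 : v * (u / v * (Real.log u - Real.log v) - u / v + 1)
          = u * (Real.log u - Real.log v) - u + v := by field_simp <;> ring
      have e2 : v * ((u / v - 1) ^ 2 / 2) = (u - v) ^ 2 / (2 * v) := by
        field_simp <;> ring
      rw [e1, e2] at this
      linarith
    have h3 : (u - v) ^ 2 / (2 * v) ≤ (1 / (2 * a)) * (u - v) ^ 2 := by
      rw [div_eq_mul_inv, mul_comm]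
      apply mul_le_mul_of_nonneg_right _ (sq_nonneg _)
      rw [one_div]
      exact inv_anti₀ (by linarith) (by linarith [hv.1])
    linarith
  · -- u ≤ v : use key2 on t = u/v
    have ht0 : 0 < u / v := div_pos hu0 hv0
    have ht1 : u / v ≤ 1 := (div_le_one hv0).mpr hle
    have hk := key2 (u / v) ht0 ht1
    have h2 : -u + v + u * Real.log (u / v) ≤ (u - v) ^ 2 / (2 * u) := by
      have := mul_le_mul_of_nonneg_left hk hv0.le
      have e1 : v * (u / v * Real.log (u / v) - u / v + 1)
          = u * Real.log (u / v) - u + v := by field_simp <;> ring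
      have e2 : v * ((u / v - 1) ^ 2 / (2 * (u / v))) = (u - v) ^ 2 / (2 * u) := by
        field_simp <;> ring
      rw [e1, e2] at this
      linarith
    have h3 : (u - v) ^ 2 / (2 * u) ≤ (1 / (2 * a)) * (u - v) ^ 2 := by
      rw [div_eq_mul_inv, mul_comm]
      apply mul_le_mul_of_nonneg_right _ (sq_nonneg _)
      rw [one_div]
      exact inv_anti₀ (by linarith) (by linarith [hu.1])
    linarith

/-- Generalized I-divergence (Bregman divergence of negative entropy). -/
noncomputable def Idiv {d : ℕ} (x y : Fin d → ℝ) : ℝ :=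
  ∑ i, (-(x i) + y i + x i * Real.log (x i / y i))

theorem Idiv_le_inv_two_a_mul_sq_norm
    (d : ℕ) (hd : 1 ≤ d) (a b : ℝ) (ha : 0 < a) (hab : a ≤ b)
    (x y : Fin d → ℝ)
    (hx : ∀ i, x i ∈ Set.Icc a b) (hy : ∀ i, y i ∈ Set.Icc a b) :
    Idiv x y ≤ (1 / (2 * a)) * ∑ i, (x i - y i) ^ 2 := by
  rw [Idiv, Finset.mul_sum]
  exact Finset.sum_le_sum fun i _ => pointwise a b (x i) (y i) ha (hx i) (hy i)
end

section
/- Let d ≥ 1 be a natural number and 0 < a ≤ b be real numbers. For all vectors z, y ∈ [a,b]^d, the generalized I-divergence satisfies D_I(z‖y) ≥ (1/(2b))·‖z − y‖₂². -/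
lemma Idiv_key (b x y : ℝ) (hb : 0 < b) (hx : 0 < x) (hxb : x ≤ b)
    (hy0 : 0 < y) (hyb : y ≤ b) :
    (x - y) ^ 2 / (2 * b) ≤ -x + y + x * Real.log (x / y) := by
  set g : ℝ → ℝ := fun t => t * Real.log t - t * Real.log y - t + y - (t - y) ^ 2 / (2 * b)
    with hg
  have hderiv : ∀ t : ℝ, 0 < t →
      HasDerivAt g (Real.log t - Real.log y - (t - y) / b) t := by
    intro t ht
    have h1 := Real.hasDerivAt_mul_log (ne_of_gt ht)
    have h2 : HasDerivAt (fun s : ℝ => s * Real.log y) (Real.log y) t :=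
      hasDerivAt_mul_const _
    have h3 : HasDerivAt (fun s : ℝ => (s - y) ^ 2 / (2 * b))
        ((2 * (t - y) ^ 1 * 1) / (2 * b)) t :=
      (((hasDerivAt_id t).sub_const y).pow 2).div_const _
    have h := (((h1.sub h2).sub (hasDerivAt_id t)).add_const y).sub h3
    refine h.congr_deriv ?_
    ring
  have hgy : g y = 0 := by simp [hg]
  have key : 0 ≤ g x := by
    rcases le_total y x with hle | hle
    · -- g monotone on [y, x]
      have hmono : MonotoneOn g (Set.Icc y x) := by
        apply monotoneOn_of_deriv_nonneg (convex_Icc y x)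
        · exact fun t ht =>
            (hderiv t (lt_of_lt_of_le hy0 ht.1)).continuousAt.continuousWithinAt
        · intro t ht
          rw [interior_Icc] at ht
          exact ((hderiv t (lt_trans hy0 ht.1)).differentiableAt).differentiableWithinAt
        · intro t ht
          rw [interior_Icc] at ht
          have ht0 : 0 < t := lt_trans hy0 ht.1
          rw [(hderiv t ht0).deriv]
          have hlog : (t - y) / t ≤ Real.log t - Real.log y := by
            have h := Real.log_le_sub_one_of_pos (div_pos hy0 ht0)
            rw [Real.log_div (ne_of_gt hy0) (ne_of_gt ht0)] at h
            have heq : (t - y) / t = 1 - y / t := by field_simp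
            linarith
          have htb : t ≤ b := le_trans (le_of_lt ht.2) hxb
          have hdd : (t - y) / b ≤ (t - y) / t :=
            div_le_div_of_nonneg_left (by linarith [ht.1]) ht0 htb
          linarith
      have h := hmono (Set.left_mem_Icc.mpr hle) (Set.right_mem_Icc.mpr hle) hle
      linarith [hgy ▸ h]
    · -- g antitone on [x, y]
      have hanti : AntitoneOn g (Set.Icc x y) := by
        apply antitoneOn_of_deriv_nonpos (convex_Icc x y)
        · exact fun t ht =>
            (hderiv t (lt_of_lt_of_le hx ht.1)).continuousAt.continuousWithinAt
        · intro t ht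
          rw [interior_Icc] at ht
          exact ((hderiv t (lt_trans hx ht.1)).differentiableAt).differentiableWithinAt
        · intro t ht
          rw [interior_Icc] at ht
          have ht0 : 0 < t := lt_trans hx ht.1
          rw [(hderiv t ht0).deriv]
          have hlog : Real.log t - Real.log y ≤ (t - y) / y := by
            have h := Real.log_le_sub_one_of_pos (div_pos ht0 hy0)
            rw [Real.log_div (ne_of_gt ht0) (ne_of_gt hy0)] at h
            have heq : (t - y) / y = t / y - 1 := by field_simp
            linarith
          have hinv : b⁻¹ ≤ y⁻¹ := by
            apply inv_anti₀ hy0 hyb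
          have hdd : (t - y) / y ≤ (t - y) / b := by
            rw [div_eq_mul_inv, div_eq_mul_inv]
            exact mul_le_mul_of_nonpos_left hinv (by linarith [ht.2])
          linarith
      have h := hanti (Set.left_mem_Icc.mpr hle) (Set.right_mem_Icc.mpr hle) hle
      linarith [hgy ▸ h]
  have hxy : x * Real.log (x / y) = x * Real.log x - x * Real.log y := by
    rw [Real.log_div (ne_of_gt hx) (ne_of_gt hy0)]; ring
  simp only [hg] at key
  linarith

theorem Idiv_ge_inv_two_b_mul_sq_norm
    (d : ℕ) (hd : 1 ≤ d) (a b : ℝ) (ha : 0 < a) (hab : a ≤ b)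
    (z y : Fin d → ℝ)
    (hz : ∀ i, z i ∈ Set.Icc a b) (hy : ∀ i, y i ∈ Set.Icc a b) :
    (1 / (2 * b)) * ∑ i, (z i - y i) ^ 2 ≤ Idiv z y := by
  have hb : 0 < b := lt_of_lt_of_le ha hab
  rw [Finset.mul_sum, Idiv]
  apply Finset.sum_le_sum
  intro i _
  rw [one_div, inv_mul_eq_div]
  exact Idiv_key b (z i) (y i) hb (lt_of_lt_of_le ha (hz i).1) (hz i).2
    (lt_of_lt_of_le ha (hy i).1) (hy i).2
end

section
/- Let d ≥ 1 be a natural number and 0 < a ≤ b be real numbers. For all vectors x, y, z ∈ [a,b]^d, the generalized I-divergence satisfies D_I(x‖y) ≤ (1/a)·‖x − z‖₂² + (2b/a)·D_I(z‖y). -/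
/-- 2(s-1)/(s+1) ≤ log s for s ≥ 1 -/
lemma log_ge_two_mul (s : ℝ) (hs : 1 ≤ s) : 2*(s-1)/(s+1) ≤ Real.log s := by
  have hs0 : (0:ℝ) < s := lt_of_lt_of_le one_pos hs
  set f : ℝ → ℝ := fun u => Real.log u + 4*(u+1)⁻¹ with hf
  have hd : ∀ t : ℝ, 0 < t → HasDerivAt f (t⁻¹ + 4*(-1/(t+1)^2)) t := by
    intro t ht
    have h1 := Real.hasDerivAt_log (ne_of_gt ht)
    have h2 : HasDerivAt (fun u : ℝ => u + 1) 1 t := (hasDerivAt_id t).add_const 1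
    have hne : t + 1 ≠ 0 := by positivity
    have h3 := h2.inv hne
    have h4 := h3.const_mul (4:ℝ)
    exact h1.add h4
  have hmono : MonotoneOn f (Set.Ici 1) := by
    apply monotoneOn_of_deriv_nonneg (convex_Ici 1)
    · intro t ht
      have ht0 : (0:ℝ) < t := lt_of_lt_of_le one_pos ht
      exact ((hd t ht0).continuousAt).continuousWithinAt
    · intro t ht
      rw [interior_Ici] at ht
      have ht0 : (0:ℝ) < t := lt_trans one_pos ht
      exact ((hd t ht0).differentiableAt).differentiableWithinAt
    · intro t ht
      rw [interior_Ici] at ht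
      have ht1 : (1:ℝ) < t := ht
      have ht0 : (0:ℝ) < t := lt_trans one_pos ht1
      rw [(hd t ht0).deriv]
      have h1 : (0:ℝ) < t + 1 := by linarith
      have heq : t⁻¹ + 4*(-1/(t+1)^2) = ((t+1)^2 - 4*t) / (t * (t+1)^2) := by
        field_simp; ring
      rw [heq]
      apply div_nonneg (by nlinarith) (by positivity)
  have key := hmono (Set.mem_Ici.mpr le_rfl) (Set.mem_Ici.mpr hs) hs
  have hf1 : f 1 = 2 := by simp [hf]; norm_num
  have hfs : f s = Real.log s + 4*(s+1)⁻¹ := rfl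
  rw [hf1, hfs] at key
  have hs1 : (0:ℝ) < s + 1 := by linarith
  rw [div_le_iff₀ hs1]
  have h4 : (s+1)⁻¹ * (s+1) = 1 := inv_mul_cancel₀ (ne_of_gt hs1)
  nlinarith [key, h4]

/-- log s ≤ (s - 1/s)/2 for s ≥ 1 -/
lemma log_le_half_sub (s : ℝ) (hs : 1 ≤ s) : Real.log s ≤ (s - s⁻¹)/2 := by
  have hs0 : (0:ℝ) < s := lt_of_lt_of_le one_pos hs
  set f : ℝ → ℝ := fun u => (u - u⁻¹)/2 - Real.log u with hf
  have hd : ∀ t : ℝ, 0 < t → HasDerivAt f ((1 - (-(t^2)⁻¹))/2 - t⁻¹) t := by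
    intro t ht
    have h1 := Real.hasDerivAt_log (ne_of_gt ht)
    have h2 : HasDerivAt (fun u : ℝ => u⁻¹) (-(t^2)⁻¹) t := hasDerivAt_inv (ne_of_gt ht)
    have h3 := ((hasDerivAt_id t).sub h2).div_const (2:ℝ)
    exact h3.sub h1
  have hmono : MonotoneOn f (Set.Ici 1) := by
    apply monotoneOn_of_deriv_nonneg (convex_Ici 1)
    · intro t ht
      have ht0 : (0:ℝ) < t := lt_of_lt_of_le one_pos ht
      exact ((hd t ht0).continuousAt).continuousWithinAt
    · intro t ht
      rw [interior_Ici] at ht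
      have ht0 : (0:ℝ) < t := lt_trans one_pos ht
      exact ((hd t ht0).differentiableAt).differentiableWithinAt
    · intro t ht
      rw [interior_Ici] at ht
      have ht0 : (0:ℝ) < t := lt_trans one_pos ht
      rw [(hd t ht0).deriv]
      have heq : (1 - (-(t^2)⁻¹))/2 - t⁻¹ = (t-1)^2 / (2*t^2) := by
        field_simp; ring
      rw [heq]
      positivity
  have key := hmono (Set.mem_Ici.mpr le_rfl) (Set.mem_Ici.mpr hs) hs
  have hf1 : f 1 = 0 := by simp [hf]
  rw [hf1] at key
  have : f s = (s - s⁻¹)/2 - Real.log s := rfl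
  linarith [key, this ▸ key]

/-- upper bound: d(u,v) ≤ (u-v)^2/(2a) for u,v ≥ a > 0 -/
lemma key_upper (a u v : ℝ) (ha : 0 < a) (hu : a ≤ u) (hv : a ≤ v) :
    -u + v + u * Real.log (u/v) ≤ (u-v)^2/(2*a) := by
  have hu0 : 0 < u := lt_of_lt_of_le ha hu
  have hv0 : 0 < v := lt_of_lt_of_le ha hv
  rcases le_total v u with h | h
  · have hs : 1 ≤ u/v := (one_le_div hv0).mpr h
    have hL := log_le_half_sub (u/v) hs
    have h1 : u * Real.log (u/v) ≤ u * ((u/v - (u/v)⁻¹)/2) :=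
      mul_le_mul_of_nonneg_left hL (le_of_lt hu0)
    have h2 : u * ((u/v - (u/v)⁻¹)/2) = (u^2 - v^2)/(2*v) := by
      rw [inv_div]; field_simp
    have h3 : -u + v + (u^2 - v^2)/(2*v) = (u-v)^2/(2*v) := by field_simp; ring
    have h4 : (u-v)^2/(2*v) ≤ (u-v)^2/(2*a) :=
      div_le_div_of_nonneg_left (by positivity) (by positivity) (by linarith)
    linarith [h2 ▸ h1]
  · have hs : 1 ≤ v/u := (one_le_div hu0).mpr h
    have hL := log_ge_two_mul (v/u) hs
    have hlog : Real.log (u/v) = -Real.log (v/u) := by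
      rw [Real.log_div (ne_of_gt hu0) (ne_of_gt hv0),
          Real.log_div (ne_of_gt hv0) (ne_of_gt hu0)]; ring
    have huv : 0 < u + v := by linarith
    have h1 : u * Real.log (u/v) ≤ u * (-(2*(v/u-1)/(v/u+1))) := by
      rw [hlog]
      exact mul_le_mul_of_nonneg_left (neg_le_neg hL) (le_of_lt hu0)
    have h2 : u * (2*(v/u-1)/(v/u+1)) = 2*u*(v-u)/(v+u) := by field_simp
    rw [mul_neg, h2] at h1
    have h3 : -u + v + (-(2*u*(v-u)/(v+u))) = (u-v)^2/(u+v) := by field_simp; ring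
    have h4 : (u-v)^2/(u+v) ≤ (u-v)^2/(2*a) :=
      div_le_div_of_nonneg_left (by positivity) (by positivity) (by linarith)
    linarith

/-- lower bound: (u-v)^2/(2b) ≤ d(u,v) for 0 < u,v ≤ b -/
lemma key_lower (b u v : ℝ) (hu : 0 < u) (hub : u ≤ b) (hv : 0 < v) (hvb : v ≤ b) :
    (u-v)^2/(2*b) ≤ -u + v + u * Real.log (u/v) := by
  have hb : 0 < b := lt_of_lt_of_le hu hub
  rcases le_total v u with h | h
  · have hs : 1 ≤ u/v := (one_le_div hv).mpr h
    have hL := log_ge_two_mul (u/v) hs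
    have h1 : u * (2*(u/v-1)/(u/v+1)) ≤ u * Real.log (u/v) :=
      mul_le_mul_of_nonneg_left hL (le_of_lt hu)
    have huv : 0 < u + v := by linarith
    have h2 : u * (2*(u/v-1)/(u/v+1)) = 2*u*(u-v)/(u+v) := by field_simp
    have h3 : -u + v + 2*u*(u-v)/(u+v) = (u-v)^2/(u+v) := by field_simp; ring
    have h4 : (u-v)^2/(2*b) ≤ (u-v)^2/(u+v) :=
      div_le_div_of_nonneg_left (by positivity) (by positivity) (by linarith)
    linarith [h2 ▸ h1]
  · have hs : 1 ≤ v/u := (one_le_div hu).mpr h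
    have hL := log_le_half_sub (v/u) hs
    have hlog : Real.log (u/v) = -Real.log (v/u) := by
      rw [Real.log_div (ne_of_gt hu) (ne_of_gt hv),
          Real.log_div (ne_of_gt hv) (ne_of_gt hu)]; ring
    have h1 : u * (-((v/u - (v/u)⁻¹)/2)) ≤ u * Real.log (u/v) := by
      rw [hlog]
      exact mul_le_mul_of_nonneg_left (neg_le_neg hL) (le_of_lt hu)
    have h2 : u * ((v/u - (v/u)⁻¹)/2) = (v^2-u^2)/(2*v) := by
      rw [inv_div]; field_simp
    rw [mul_neg, h2] at h1
    have h3 : -u + v + (-((v^2-u^2)/(2*v))) = (u-v)^2/(2*v) := by field_simp; ring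
    have h4 : (u-v)^2/(2*b) ≤ (u-v)^2/(2*v) :=
      div_le_div_of_nonneg_left (by positivity) (by positivity) (by linarith)
    linarith

theorem Idiv_triangle_like
    (d : ℕ) (hd : 1 ≤ d) (a b : ℝ) (ha : 0 < a) (hab : a ≤ b)
    (x y z : Fin d → ℝ)
    (hx : ∀ i, x i ∈ Set.Icc a b) (hy : ∀ i, y i ∈ Set.Icc a b)
    (hz : ∀ i, z i ∈ Set.Icc a b) :
    Idiv x y ≤ (1 / a) * (∑ i, (x i - z i) ^ 2) + (2 * b / a) * Idiv z y := by
  have hb : 0 < b := lt_of_lt_of_le ha hab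
  have key : ∀ i : Fin d,
      -(x i) + y i + x i * Real.log (x i / y i) ≤
      (1/a) * (x i - z i)^2 + (2*b/a) * (-(z i) + y i + z i * Real.log (z i / y i)) := by
    intro i
    obtain ⟨hx1, hx2⟩ := hx i
    obtain ⟨hy1, hy2⟩ := hy i
    obtain ⟨hz1, hz2⟩ := hz i
    set u := x i; set v := y i; set w := z i
    have h1 := key_upper a u v ha hx1 hy1
    have h2 := key_lower b w v (lt_of_lt_of_le ha hz1) hz2 (lt_of_lt_of_le ha hy1) hy2
    set D := -w + v + w * Real.log (w/v) with hD
    have h3 : (u-v)^2 ≤ 2*(u-w)^2 + 2*(w-v)^2 := by nlinarith [sq_nonneg (u + v - 2*w)]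
    have h5 : (w-v)^2 ≤ 2*b*D := by
      have := (div_le_iff₀ (by positivity : (0:ℝ) < 2*b)).mp h2
      linarith
    have h6 : (u-v)^2/(2*a) ≤ (2*(u-w)^2 + 2*(2*b*D))/(2*a) := by
      apply div_le_div_of_nonneg_right ?_ (by positivity)
      linarith
    have h7 : (2*(u-w)^2 + 2*(2*b*D))/(2*a) = (1/a)*(u-w)^2 + (2*b/a)*D := by
      field_simp
    calc -u + v + u * Real.log (u/v) ≤ (u-v)^2/(2*a) := h1
      _ ≤ (2*(u-w)^2 + 2*(2*b*D))/(2*a) := h6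
      _ = (1/a)*(u-w)^2 + (2*b/a)*D := h7
  calc Idiv x y ≤ ∑ i, ((1/a) * (x i - z i)^2 +
        (2*b/a) * (-(z i) + y i + z i * Real.log (z i / y i))) :=
      Finset.sum_le_sum (fun i _ => key i)
    _ = (1 / a) * (∑ i, (x i - z i) ^ 2) + (2 * b / a) * Idiv z y := by
      rw [Finset.sum_add_distrib, ← Finset.mul_sum, ← Finset.mul_sum]; rfl
end

section
/- Let d ≥ 1 be a natural number and 0 < a ≤ b be real numbers. For all vectors x, y, z ∈ [a,b]^d, the generalized I-divergence satisfies D_I(x‖y) ≤ (1/a)·‖x − z‖₂² + (b/a²)·‖z − y‖₂². -/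
lemma log_le_half_sub_inv {t : ℝ} (ht : 1 ≤ t) : Real.log t ≤ (t - t⁻¹) / 2 := by
  have hmono : MonotoneOn (fun s : ℝ => (s - s⁻¹) / 2 - Real.log s) (Set.Ici 1) := by
    have hder : ∀ s ∈ Set.Ioi (1:ℝ), HasDerivAt (fun s : ℝ => (s - s⁻¹) / 2 - Real.log s)
        ((1 - (-(s^2)⁻¹)) / 2 - s⁻¹) s := by
      intro s hs
      have hs0 : (0:ℝ) < s := lt_trans one_pos hs
      exact (((hasDerivAt_id s).sub (hasDerivAt_inv hs0.ne')).div_const 2).sub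
        (Real.hasDerivAt_log hs0.ne')
    apply monotoneOn_of_deriv_nonneg (convex_Ici 1)
    · apply ContinuousOn.sub
      · exact (continuousOn_id.sub (continuousOn_id.inv₀ (fun s hs =>
          ne_of_gt (lt_of_lt_of_le one_pos hs)))).div_const 2
      · exact Real.continuousOn_log.mono (fun s hs =>
          ne_of_gt (lt_of_lt_of_le one_pos hs))
    · intro s hs
      rw [interior_Ici] at hs
      exact ((hder s hs).differentiableAt).differentiableWithinAt
    · intro s hs
      rw [interior_Ici] at hs
      have hs1 : (1:ℝ) < s := hs
      have hs0 : (0:ℝ) < s := lt_trans one_pos hs1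
      rw [(hder s hs).deriv]
      rw [le_sub_iff_add_le, zero_add, le_div_iff₀ (by norm_num : (0:ℝ) < 2)]
      have h2 : s⁻¹ = 1/s := by rw [one_div]
      have h3 : (s^2)⁻¹ = 1/s^2 := by rw [one_div]
      rw [h2, h3]
      rw [div_mul_eq_mul_div, div_le_iff₀ hs0, sub_neg_eq_add]
      have : (1 + 1/s^2) * s^2 = s^2 + 1 := by field_simp
      nlinarith [sq_nonneg (s - 1), sq_nonneg s]
  have h1 : (1:ℝ) ∈ Set.Ici (1:ℝ) := Set.self_mem_Ici
  have ht' : t ∈ Set.Ici (1:ℝ) := Set.mem_Ici.2 ht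
  have := hmono h1 ht' ht
  simp only [Real.log_one, inv_one, sub_self, zero_div, sub_zero] at this
  linarith

lemma two_mul_div_le_log {t : ℝ} (ht : 1 ≤ t) : 2 * (t - 1) / (t + 1) ≤ Real.log t := by
  have hmono : MonotoneOn (fun s : ℝ => Real.log s - 2 * (s - 1) / (s + 1)) (Set.Ici 1) := by
    have hder : ∀ s ∈ Set.Ioi (1:ℝ), HasDerivAt (fun s : ℝ => Real.log s - 2 * (s - 1) / (s + 1))
        (s⁻¹ - (2 * (s + 1) - 2 * (s - 1) * 1) / (s + 1)^2) s := by
      intro s hs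
      have hs0 : (0:ℝ) < s := lt_trans one_pos hs
      have hsp : (0:ℝ) < s + 1 := by linarith
      have Hq : HasDerivAt (fun s : ℝ => 2 * (s - 1) / (s + 1))
          ((2 * (s + 1) - 2 * (s - 1) * 1) / (s + 1)^2) s := by
        have h1 : HasDerivAt (fun s : ℝ => 2 * (s - 1)) 2 s := by
          simpa using (((hasDerivAt_id s).sub_const 1).const_mul 2)
        have h2 : HasDerivAt (fun s : ℝ => s + 1) 1 s := (hasDerivAt_id s).add_const 1
        have H := h1.div h2 hsp.ne'
        rw [mul_one] at H ⊢
        exact H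
      exact (Real.hasDerivAt_log hs0.ne').sub Hq
    apply monotoneOn_of_deriv_nonneg (convex_Ici 1)
    · apply ContinuousOn.sub
      · exact Real.continuousOn_log.mono (fun s hs =>
          ne_of_gt (lt_of_lt_of_le one_pos hs))
      · exact (continuousOn_const.mul (continuousOn_id.sub continuousOn_const)).div
          (continuousOn_id.add continuousOn_const)
          (fun s hs => by have : (1:ℝ) ≤ s := hs; positivity)
    · intro s hs
      rw [interior_Ici] at hs
      exact ((hder s hs).differentiableAt).differentiableWithinAt
    · intro s hs
      rw [interior_Ici] at hs
      have hs1 : (1:ℝ) < s := hs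
      have hs0 : (0:ℝ) < s := lt_trans one_pos hs1
      have hsp : (0:ℝ) < s + 1 := by linarith
      rw [(hder s hs).deriv]
      rw [sub_nonneg, div_le_iff₀ (by positivity), inv_mul_eq_div,
        le_div_iff₀ hs0]
      nlinarith [sq_nonneg (s - 1)]
  have h1 : (1:ℝ) ∈ Set.Ici (1:ℝ) := Set.self_mem_Ici
  have ht' : t ∈ Set.Ici (1:ℝ) := Set.mem_Ici.2 ht
  have := hmono h1 ht' ht
  simp only [Real.log_one, sub_self, mul_zero, zero_div, sub_zero] at this
  linarith

lemma key_pointwise (a u v : ℝ) (ha : 0 < a) (hu : a ≤ u) (hv : a ≤ v) :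
    -u + v + u * Real.log (u / v) ≤ (u - v)^2 / (2 * a) := by
  have hu0 : 0 < u := lt_of_lt_of_le ha hu
  have hv0 : 0 < v := lt_of_lt_of_le ha hv
  rcases le_total v u with h | h
  · have ht : 1 ≤ u / v := (one_le_div hv0).2 h
    have hlog := log_le_half_sub_inv ht
    have h1 : u * Real.log (u / v) ≤ u * ((u / v - (u / v)⁻¹) / 2) :=
      mul_le_mul_of_nonneg_left hlog hu0.le
    have h2 : -u + v + u * ((u / v - (u / v)⁻¹) / 2) = (u - v)^2 / (2 * v) := by
      rw [inv_div]
      field_simp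
      ring
    have h3 : (u - v)^2 / (2 * v) ≤ (u - v)^2 / (2 * a) := by
      apply div_le_div_of_nonneg_left (sq_nonneg _) (by linarith) (by linarith)
    linarith
  · have ht : 1 ≤ v / u := (one_le_div hu0).2 h
    have hlog := two_mul_div_le_log ht
    have hlog2 : Real.log (u / v) = - Real.log (v / u) := by
      rw [← Real.log_inv, inv_div]
    have h1 : u * Real.log (u / v) ≤ u * (-(2 * (v / u - 1) / (v / u + 1))) := by
      rw [hlog2]
      apply mul_le_mul_of_nonneg_left _ hu0.le
      linarith
    have h2 : -u + v + u * (-(2 * (v / u - 1) / (v / u + 1))) = (v - u)^2 / (u + v) := by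
      have huv : (0:ℝ) < v / u + 1 := by positivity
      field_simp
      ring
    have h3 : (v - u)^2 / (u + v) ≤ (u - v)^2 / (2 * a) := by
      have : (v - u)^2 = (u - v)^2 := by ring
      rw [this]
      apply div_le_div_of_nonneg_left (sq_nonneg _) (by linarith) (by linarith)
    linarith

theorem Idiv_le_two_sq_norms
    (d : ℕ) (hd : 1 ≤ d) (a b : ℝ) (ha : 0 < a) (hab : a ≤ b)
    (x y z : Fin d → ℝ)
    (hx : ∀ i, x i ∈ Set.Icc a b) (hy : ∀ i, y i ∈ Set.Icc a b)
    (hz : ∀ i, z i ∈ Set.Icc a b) :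
    Idiv x y ≤ (1 / a) * (∑ i, (x i - z i) ^ 2)
      + (b / a ^ 2) * (∑ i, (z i - y i) ^ 2) := by
  unfold Idiv
  rw [Finset.mul_sum, Finset.mul_sum, ← Finset.sum_add_distrib]
  apply Finset.sum_le_sum
  intro i _
  have h1 := key_pointwise a (x i) (y i) ha (hx i).1 (hy i).1
  have h2 : (x i - y i)^2 / (2 * a) ≤ ((x i - z i)^2 + (z i - y i)^2) / a := by
    rw [div_le_div_iff₀ (by positivity) ha]
    nlinarith [sq_nonneg (x i - 2 * z i + y i), ha.le]
  have h4 : 1 / a ≤ b / a^2 := by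
    rw [div_le_div_iff₀ ha (by positivity)]
    nlinarith
  have h5 : ((x i - z i)^2 + (z i - y i)^2) / a
      = (1 / a) * (x i - z i)^2 + (1 / a) * (z i - y i)^2 := by ring
  have h6 : (1 / a) * (z i - y i)^2 ≤ (b / a^2) * (z i - y i)^2 :=
    mul_le_mul_of_nonneg_right h4 (sq_nonneg _)
  calc -(x i) + y i + x i * Real.log (x i / y i)
      ≤ (x i - y i)^2 / (2 * a) := h1
    _ ≤ ((x i - z i)^2 + (z i - y i)^2) / a := h2
    _ = (1 / a) * (x i - z i)^2 + (1 / a) * (z i - y i)^2 := h5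
    _ ≤ (1 / a) * (x i - z i)^2 + (b / a^2) * (z i - y i)^2 := by linarith
end

section
/- Let S be a positive natural number and φ : ℝ → ℝ a function with finite limits φ₋ = lim_{u→−∞} φ(u) and φ₊ = lim_{u→+∞} φ(u) satisfying φ₋ ≠ φ₊ and φ₊ ≠ 0. Let t_1 < t_2 < ⋯ < t_S be reals and let b_1, …, b_S be reals with b_1 < t_1 and (t_{k−1} + t_k)/2 < b_k < t_k for every 2 ≤ k ≤ S. Then there exists α > 0 such that the S × S matrix A with entries A_{ik} = φ(α·(t_i − b_k)) is invertible. -/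
open Filter


private lemma aux_step_tri {S : ℕ} (hS : 0 < S) (a c : ℝ) (i k j : Fin S) :
    (if j ≤ i then (1 : ℝ) else 0) *
      (if j.val = 0 then (if k.val = 0 then a else c)
       else (if k = j then a - c else 0))
    = (if j = (⟨0, hS⟩ : Fin S) then (if k.val = 0 then a else c) else 0)
      + (if j = k then (if k.val = 0 ∨ ¬ k ≤ i then 0 else a - c) else 0) := by
  split_ifs <;>
    first
    | ring1
    | (exfalso;
       simp only [Fin.ext_iff, Fin.le_def, Fin.lt_def, not_le, not_or, not_not,
         show ((⟨0, hS⟩ : Fin S)).val = 0 from rfl] at *;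
       omega)

private lemma aux_sum_tri {S : ℕ} (hS : 0 < S) (a c : ℝ) (i k : Fin S) :
    ((if k.val = 0 then a else c)
      + (if k.val = 0 ∨ ¬ k ≤ i then 0 else a - c)) = if k ≤ i then a else c := by
  split_ifs <;>
    first
    | ring1
    | (exfalso;
       simp only [Fin.ext_iff, Fin.le_def, Fin.lt_def, not_le, not_or, not_not,
         show ((⟨0, hS⟩ : Fin S)).val = 0 from rfl] at *;
       omega)

theorem triangular_limit_matrix_invertible
    (S : ℕ) (hS : 0 < S)
    (φ : ℝ → ℝ) (φminus φplus : ℝ)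
    (hbot : Tendsto φ atBot (nhds φminus))
    (htop : Tendsto φ atTop (nhds φplus))
    (hne : φminus ≠ φplus) (hφplus : φplus ≠ 0)
    (t b : Fin S → ℝ) (ht : StrictMono t)
    (hb0 : b ⟨0, hS⟩ < t ⟨0, hS⟩)
    (hbk : ∀ i : Fin S, ∀ hi : i.val + 1 < S,
      (t i + t ⟨i.val + 1, hi⟩) / 2 < b ⟨i.val + 1, hi⟩ ∧
      b ⟨i.val + 1, hi⟩ < t ⟨i.val + 1, hi⟩) :
    ∃ α : ℝ, 0 < α ∧
      (Matrix.of fun i k : Fin S => φ (α * (t i - b k))).det ≠ 0 := by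
  classical
  set a := φplus
  set c := φminus
  -- sign facts
  have hbt : ∀ k : Fin S, b k < t k := by
    intro k
    rcases k with ⟨kv, hk⟩
    cases kv with
    | zero => exact hb0
    | succ j => exact (hbk ⟨j, Nat.lt_of_succ_lt hk⟩ hk).2
  have hpos : ∀ i k : Fin S, k ≤ i → 0 < t i - b k := by
    intro i k hki
    have h1 : t k ≤ t i := ht.monotone hki
    have h2 := hbt k
    linarith
  have hneg : ∀ i k : Fin S, i < k → t i - b k < 0 := by
    intro i k hik
    rcases k with ⟨kv, hk⟩
    cases kv with
    | zero => exact absurd hik (by simp [Fin.lt_def])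
    | succ j =>
      have hj : j < S := Nat.lt_of_succ_lt hk
      have h1 := (hbk ⟨j, hj⟩ hk).1
      have h2 : t i ≤ t ⟨j, hj⟩ := ht.monotone (by
        simpa [Fin.le_def] using Nat.lt_succ_iff.mp hik)
      have h3 : t ⟨j, hj⟩ < t ⟨j + 1, hk⟩ := ht (by simp [Fin.lt_def])
      linarith
  -- the limit matrix and its determinant
  set L : Matrix (Fin S) (Fin S) ℝ :=
    Matrix.of (fun i k : Fin S => if k ≤ i then a else c) with hLdef
  have hac : a - c ≠ 0 := sub_ne_zero.mpr (Ne.symm hne)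
  have hLdet : L.det ≠ 0 := by
    set T : Matrix (Fin S) (Fin S) ℝ :=
      Matrix.of (fun i k : Fin S => if k ≤ i then (1 : ℝ) else 0) with hTdef
    set D : Matrix (Fin S) (Fin S) ℝ :=
      Matrix.of (fun j k : Fin S =>
        if j.val = 0 then (if k.val = 0 then a else c)
        else (if k = j then a - c else 0)) with hDdef
    have hfac : L = T * D := by
      ext i k
      simp only [hLdef, hTdef, hDdef, Matrix.mul_apply, Matrix.of_apply]
      have z : Fin S := ⟨0, hS⟩
      rw [Finset.sum_congr rfl (fun j _ => aux_step_tri hS a c i k j)]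
      rw [Finset.sum_add_distrib, Finset.sum_ite_eq' Finset.univ,
        Finset.sum_ite_eq' Finset.univ]
      simp only [Finset.mem_univ, if_true]
      exact (aux_sum_tri hS a c i k).symm
    have hTdet : T.det = 1 := by
      have hTtri : T.BlockTriangular OrderDual.toDual := by
        intro i j hij
        have : ¬ j ≤ i := not_le.mpr hij
        simp [hTdef, this]
      rw [Matrix.det_of_lowerTriangular T hTtri]
      apply Finset.prod_eq_one
      intro i _
      simp [hTdef]
    have hDdet : D.det ≠ 0 := by
      have hDtri : D.BlockTriangular id := by
        intro i j hij
        have hj : j.val < i.val := hij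
        have h1 : ¬ i.val = 0 := by omega
        have h2 : ¬ j = i := by
          intro h; subst h; exact lt_irrefl _ hj
        simp [hDdef, h1, h2]
      rw [Matrix.det_of_upperTriangular hDtri]
      apply Finset.prod_ne_zero_iff.mpr
      intro i _
      by_cases hi : i.val = 0 <;> simp [hDdef, hi, hφplus, hac]
    rw [hfac, Matrix.det_mul, hTdet, one_mul]
    exact hDdet
  -- convergence of the matrices as α → ∞
  have hM : Tendsto (fun α : ℝ => (Matrix.of fun i k : Fin S => φ (α * (t i - b k))))
      atTop (nhds L) := by
    refine tendsto_pi_nhds.mpr ?_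
    intro i
    rw [tendsto_pi_nhds]
    intro k
    simp only [Matrix.of_apply, hLdef]
    by_cases h : k ≤ i
    · simp only [h, if_true]
      exact htop.comp (tendsto_id.atTop_mul_const (hpos i k h))
    · simp only [h, if_false]
      exact hbot.comp (tendsto_id.atTop_mul_const_of_neg (hneg i k (not_le.mp h)))
  have hdet : Tendsto (fun α : ℝ => (Matrix.of fun i k : Fin S => φ (α * (t i - b k))).det)
      atTop (nhds L.det) := by
    exact ((Continuous.matrix_det continuous_id).tendsto L).comp hM
  have hev := (hdet.eventually_ne hLdet).and (eventually_gt_atTop (0 : ℝ))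
  rcases hev.exists with ⟨α, h1, h2⟩
  exact ⟨α, h2, h1⟩
end

section
/- Let d and S be positive natural numbers, let x_1, …, x_S ∈ ℝ^d be pairwise distinct, let y_1, …, y_S ∈ ℝ be arbitrary target values, and let φ : ℝ → ℝ have finite limits φ₋ = lim_{u→−∞} φ(u) and φ₊ = lim_{u→+∞} φ(u) with φ₋ ≠ φ₊ and φ₊ ≠ 0. Then there exist a ∈ ℝ^d, reals b_1, …, b_S, α > 0, and coefficients c_0, c_1, …, c_S ∈ ℝ such that c_0 + Σ_{k=1}^S c_k·φ(α·(⟨a, x_i⟩ − b_k)) = y_i for every 1 ≤ i ≤ S. -/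
open Filter

lemma aux_dot_add (d : ℕ) (a u v : Fin d → ℝ) (t : ℝ) :
    (∑ j, (a j + t * u j) * v j) = (∑ j, a j * v j) + t * ∑ j, u j * v j := by
  rw [Finset.mul_sum, ← Finset.sum_add_distrib]
  exact Finset.sum_congr rfl fun j _ => by ring

lemma aux_exists_dot_ne (d : ℕ) (V : Finset (Fin d → ℝ)) (hV : ∀ v ∈ V, v ≠ 0) :
    ∃ a : Fin d → ℝ, ∀ v ∈ V, (∑ j, a j * v j) ≠ 0 := by
  classical
  induction V using Finset.induction_on with
  | empty => exact ⟨0, by simp⟩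
  | @insert u V' hu ih =>
    obtain ⟨a, ha⟩ := ih fun v hv => hV v (Finset.mem_insert_of_mem hv)
    have hBfin : (⋃ v ∈ (insert u V' : Finset (Fin d → ℝ)),
        {t : ℝ | (∑ j, a j * v j) + t * (∑ j, u j * v j) = 0}).Finite := by
      apply Set.Finite.biUnion (Finset.finite_toSet _)
      intro v hv
      apply Set.Subsingleton.finite
      intro t₁ h₁ t₂ h₂
      simp only [Set.mem_setOf_eq] at h₁ h₂
      have hB : (∑ j, u j * v j) ≠ 0 ∨ (∑ j, a j * v j) ≠ 0 := by
        rcases Finset.mem_insert.mp hv with h | hv'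
        · left
          subst h
          intro h0
          have hu0 : v ≠ 0 := hV v (Finset.mem_insert_self v V')
          apply hu0
          funext j
          have hz : ∀ j ∈ Finset.univ, (0:ℝ) ≤ v j * v j := fun j _ => mul_self_nonneg _
          have := (Finset.sum_eq_zero_iff_of_nonneg hz).mp h0 j (Finset.mem_univ j)
          have := mul_self_eq_zero.mp this
          simpa using this
        · right; exact ha v hv'
      rcases hB with hB | hA
      · have : (t₁ - t₂) * (∑ j, u j * v j) = 0 := by linarith
        rcases mul_eq_zero.mp this with h | h
        · linarith
        · exact absurd h hB
      · by_cases hB0 : (∑ j, u j * v j) = 0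
        · exfalso; apply hA; rw [hB0] at h₁; linarith
        · have : (t₁ - t₂) * (∑ j, u j * v j) = 0 := by linarith
          rcases mul_eq_zero.mp this with h | h
          · linarith
          · exact absurd h hB0
    obtain ⟨t, ht⟩ := hBfin.infinite_compl.nonempty
    refine ⟨fun j => a j + t * u j, fun v hv => ?_⟩
    rw [aux_dot_add]
    intro h0
    apply ht
    exact Set.mem_biUnion hv h0

lemma aux_exists_proj_inj (d S : ℕ) (x : Fin S → (Fin d → ℝ)) (hx : Function.Injective x) :
    ∃ a : Fin d → ℝ, Function.Injective (fun i => ∑ j, a j * x i j) := by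
  classical
  set V : Finset (Fin d → ℝ) :=
    ((Finset.univ : Finset (Fin S × Fin S)).filter (fun p => p.1 ≠ p.2)).image
      (fun p => x p.1 - x p.2) with hVdef
  have hV : ∀ v ∈ V, v ≠ 0 := by
    intro v hv
    simp only [hVdef, Finset.mem_image, Finset.mem_filter, Finset.mem_univ, true_and] at hv
    obtain ⟨p, hpne, rfl⟩ := hv
    exact sub_ne_zero_of_ne (fun h => hpne (hx h))
  obtain ⟨a, ha⟩ := aux_exists_dot_ne d V hV
  refine ⟨a, fun i i' h => ?_⟩
  by_contra hne
  have hmem : x i - x i' ∈ V := by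
    simp only [hVdef, Finset.mem_image, Finset.mem_filter, Finset.mem_univ, true_and]
    exact ⟨(i, i'), hne, rfl⟩
  apply ha _ hmem
  simp only at h
  have : ∑ j, a j * (x i j - x i' j) = (∑ j, a j * x i j) - ∑ j, a j * x i' j := by
    rw [← Finset.sum_sub_distrib]
    exact Finset.sum_congr rfl fun j _ => by ring
  simp only [Pi.sub_apply]
  rw [this, h, sub_self]

lemma aux_L_det_ne (S : ℕ) (hS : 0 < S) (φm φp : ℝ) (hne : φm ≠ φp) (hp : φp ≠ 0) :
    (Matrix.of fun i k : Fin S => if (k:ℕ) ≤ (i:ℕ) then φp else φm).det ≠ 0 := by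
  classical
  rw [Ne, ← Matrix.exists_mulVec_eq_zero_iff]
  rintro ⟨c, hc0, hc⟩
  apply hc0
  have h : ∀ i : Fin S, ∑ k : Fin S, (if (k:ℕ) ≤ (i:ℕ) then φp else φm) * c k = 0 := by
    intro i
    have := congrFun hc i
    simpa [Matrix.mulVec, dotProduct] using this
  have hA : ∀ m : Fin S, 0 < (m:ℕ) → c m = 0 := by
    intro m hm
    set i : Fin S := ⟨(m:ℕ) - 1, by omega⟩ with hi
    have hiv : (i:ℕ) = (m:ℕ) - 1 := rfl
    have key : ∑ k : Fin S, ((if (k:ℕ) ≤ (m:ℕ) then φp else φm)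
        - (if (k:ℕ) ≤ (i:ℕ) then φp else φm)) * c k = 0 := by
      simp only [sub_mul, Finset.sum_sub_distrib]
      rw [h m, h i, sub_zero]
    have key2 : ∑ k : Fin S, ((if (k:ℕ) ≤ (m:ℕ) then φp else φm)
        - (if (k:ℕ) ≤ (i:ℕ) then φp else φm)) * c k
        = ∑ k : Fin S, (if k = m then (φp - φm) * c k else 0) := by
      refine Finset.sum_congr rfl fun k _ => ?_
      by_cases hkm : k = m
      · subst hkm
        rw [if_pos (le_refl _), if_neg (by omega), if_pos rfl]
      · have hkm' : (k:ℕ) ≠ (m:ℕ) := fun h => hkm (Fin.ext h)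
        rw [if_neg hkm]
        by_cases hk : (k:ℕ) ≤ (i:ℕ)
        · rw [if_pos (by omega), if_pos hk, sub_self, zero_mul]
        · rw [if_neg (by omega), if_neg hk, sub_self, zero_mul]
    rw [key2, Finset.sum_ite_eq' Finset.univ m, if_pos (Finset.mem_univ m)] at key
    rcases mul_eq_zero.mp key with h' | h'
    · exact absurd (by linarith : φm = φp) hne
    · exact h'
  funext k
  by_cases hk : (k:ℕ) = 0
  · have hrow := h k
    rw [Finset.sum_eq_single k] at hrow
    · rw [if_pos (le_refl _)] at hrow
      simpa [hp] using hrow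
    · intro k' _ hk'
      have : 0 < (k':ℕ) := by
        rcases Nat.eq_zero_or_pos (k':ℕ) with h0 | h0
        · exact absurd (Fin.ext (h0.trans hk.symm)) hk'
        · exact h0
      rw [hA k' this, mul_zero]
    · intro habs; exact absurd (Finset.mem_univ k) habs
  · exact hA k (Nat.pos_of_ne_zero hk)

theorem one_hidden_layer_exact_interpolation
    (d S : ℕ) (hd : 0 < d) (hS : 0 < S)
    (x : Fin S → (Fin d → ℝ)) (hx : Function.Injective x)
    (y : Fin S → ℝ)
    (φ : ℝ → ℝ) (φminus φplus : ℝ)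
    (hbot : Tendsto φ atBot (nhds φminus))
    (htop : Tendsto φ atTop (nhds φplus))
    (hne : φminus ≠ φplus) (hφplus : φplus ≠ 0) :
    ∃ (a : Fin d → ℝ) (b : Fin S → ℝ) (α : ℝ) (c₀ : ℝ) (c : Fin S → ℝ),
      0 < α ∧
      ∀ i : Fin S,
        c₀ + ∑ k, c k * φ (α * ((∑ j, a j * x i j) - b k)) = y i := by
  classical
  obtain ⟨a, hp⟩ := aux_exists_proj_inj d S x hx
  set p : Fin S → ℝ := fun i => ∑ j, a j * x i j with hpdef
  set τ : Equiv.Perm (Fin S) := Tuple.sort p with hτ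
  set q : Fin S → ℝ := p ∘ τ with hqdef
  have hq : StrictMono q :=
    (Tuple.monotone_sort p).strictMono_of_injective (hp.comp τ.injective)
  set b : Fin S → ℝ := fun k =>
    if (k:ℕ) = 0 then q k - 1 else (q ⟨(k:ℕ) - 1, by omega⟩ + q k) / 2 with hbdef
  have hpos : ∀ i k : Fin S, (k:ℕ) ≤ (i:ℕ) → 0 < q i - b k := by
    intro i k hki
    have hqle : q k ≤ q i := hq.monotone (by exact hki)
    by_cases hk : (k:ℕ) = 0
    · have hbk : b k = q k - 1 := by simp only [hbdef, if_pos hk]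
      rw [hbk]; linarith
    · have hlt : (⟨(k:ℕ) - 1, by omega⟩ : Fin S) < k := by
        rw [Fin.lt_def]; simp; omega
      have := hq hlt
      have hbk : b k = (q ⟨(k:ℕ) - 1, by omega⟩ + q k) / 2 := by
        simp only [hbdef, if_neg hk]
      rw [hbk]; linarith
  have hneg : ∀ i k : Fin S, (i:ℕ) < (k:ℕ) → q i - b k < 0 := by
    intro i k hik
    have hk : (k:ℕ) ≠ 0 := by omega
    have hle : i ≤ (⟨(k:ℕ) - 1, by omega⟩ : Fin S) := by
      rw [Fin.le_def]; simp; omega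
    have h1 : q i ≤ q ⟨(k:ℕ) - 1, by omega⟩ := hq.monotone hle
    have hlt : (⟨(k:ℕ) - 1, by omega⟩ : Fin S) < k := by
      rw [Fin.lt_def]; simp; omega
    have h2 := hq hlt
    have hbk : b k = (q ⟨(k:ℕ) - 1, by omega⟩ + q k) / 2 := by
      simp only [hbdef, if_neg hk]
    rw [hbk]; linarith
  set M : ℝ → Matrix (Fin S) (Fin S) ℝ :=
    fun α => Matrix.of fun i k => φ (α * (q i - b k)) with hMdef
  set L : Matrix (Fin S) (Fin S) ℝ :=
    Matrix.of fun i k : Fin S => if (k:ℕ) ≤ (i:ℕ) then φplus else φminus with hLdef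
  have hMtend : Tendsto M atTop (nhds L) := by
    refine tendsto_pi_nhds.2 ?_
    intro i
    rw [tendsto_pi_nhds]
    intro k
    by_cases hki : (k:ℕ) ≤ (i:ℕ)
    · have : L i k = φplus := by simp only [hLdef, Matrix.of_apply, if_pos hki]
      rw [this]
      exact htop.comp (Tendsto.atTop_mul_const (hpos i k hki) tendsto_id)
    · have : L i k = φminus := by simp only [hLdef, Matrix.of_apply, if_neg hki]
      rw [this]
      exact hbot.comp (Tendsto.atTop_mul_const_of_neg (hneg i k (by omega)) tendsto_id)
  have hLdet : L.det ≠ 0 := aux_L_det_ne S hS φminus φplus hne hφplus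
  have hdettend : Tendsto (fun α => (M α).det) atTop (nhds L.det) :=
    ((continuous_id.matrix_det).tendsto L).comp hMtend
  obtain ⟨α, hαdet, hα⟩ := ((hdettend.eventually_ne hLdet).and (eventually_gt_atTop 0)).exists
  set c : Fin S → ℝ := (M α)⁻¹.mulVec (fun j => y (τ j)) with hcdef
  have hMc : (M α).mulVec c = fun j => y (τ j) := by
    rw [hcdef, Matrix.mulVec_mulVec, Matrix.mul_nonsing_inv _ (isUnit_iff_ne_zero.mpr hαdet),
      Matrix.one_mulVec]
  refine ⟨a, b, α, 0, c, hα, fun i => ?_⟩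
  have hrow := congrFun hMc (τ⁻¹ i)
  simp only [Matrix.mulVec, dotProduct, hMdef, Matrix.of_apply] at hrow
  have hqτ : q (τ⁻¹ i) = p i := by
    rw [hqdef]; simp
  have hyτ : y (τ (τ⁻¹ i)) = y i := by simp
  rw [hqτ, hyτ] at hrow
  rw [zero_add, ← hrow]
  exact Finset.sum_congr rfl fun k _ => by rw [mul_comm]
end

section
/- For every real ε with 0 < ε < 1/25, the Kullback–Leibler divergence between the two-point probability distributions (1 − ε, ε) and (1 − 25ε, 25ε) satisfies (1 − ε)·log((1 − ε)/(1 − 25ε)) − ε·log 25 > 20·ε. -/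
theorem kl_two_point_lower_bound
    (ε : ℝ) (hε : 0 < ε) (hε' : ε < 1 / 25) :
    (1 - ε) * Real.log ((1 - ε) / (1 - 25 * ε)) - ε * Real.log 25 > 20 * ε := by
  have h1 : (0:ℝ) < 1 - 25 * ε := by linarith
  have h2 : (0:ℝ) < 1 - ε := by linarith
  set x : ℝ := (1 - ε) / (1 - 25 * ε) with hx
  have hxpos : 0 < x := div_pos h2 h1
  have hxgt : 1 < x := by
    rw [hx, lt_div_iff₀ h1]; linarith
  -- log x > 1 - 1/x
  have hinv : Real.log x⁻¹ < x⁻¹ - 1 :=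
    Real.log_lt_sub_one_of_pos (inv_pos.mpr hxpos) (by
      intro h; exact absurd (inv_eq_one.mp h) (ne_of_gt hxgt))
  have hlogx : 1 - x⁻¹ < Real.log x := by
    rw [Real.log_inv] at hinv; linarith
  -- 1 - x⁻¹ = 24ε/(1-ε)
  have hval : 1 - x⁻¹ = 24 * ε / (1 - ε) := by
    rw [hx, inv_div]
    field_simp
    ring
  have key : (1 - ε) * Real.log x > 24 * ε := by
    have := (mul_lt_mul_iff_right₀ h2).mpr hlogx
    rw [hval] at this
    have h3 : (1 - ε) * (24 * ε / (1 - ε)) = 24 * ε := by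
      field_simp
    linarith [h3 ▸ this]
  -- log 25 < 4
  have hlog25 : Real.log 25 < 4 := by
    rw [Real.log_lt_iff_lt_exp (by norm_num)]
    have h := Real.exp_one_gt_d9
    have : Real.exp 4 = (Real.exp 1)^4 := by
      rw [← Real.exp_nat_mul]; norm_num
    calc (25:ℝ) < 2.7182818283^4 := by norm_num
      _ < Real.exp 1 ^ 4 := by
          apply pow_lt_pow_left₀ h (by norm_num)
          norm_num
      _ = Real.exp 4 := this.symm
  nlinarith
end
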